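/- Let g ≥ 2 be an integer and let f be a nonnegative trigonometric polynomial with a unique zero x₀ ∈ [0,2π), of finite order, so that β_min = min{ i ∈ ℕ : lim_{x→x₀} |x−x₀|^{2i}/f(x) < ∞ } exists. For any β ≥ β_min, the trigonometric polynomial p(x) = Π_{x̂ ∈ M_g(x₀)} (2 − 2cos(x − x̂))^{⌈β/2⌉} satisfies the TGM conditions (i) and (ii) relative to f and g. -/

import Mathlib

open Complex Filter Topology

noncomputable section

/-- A real-valued function is a trigonometric polynomial: a finite sum `∑_{|j|≤c} a_j e^{ijx}`. -/
def IsTrigPolyR (f : ℝ → ℝ) : Prop :=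
  ∃ (c : ℕ) (a : ℤ → ℂ), ∀ x : ℝ,
    (f x : ℂ) = ∑ j ∈ Finset.Icc (-(c : ℤ)) (c : ℤ), a j * Complex.exp (Complex.I * (j : ℂ) * (x : ℂ))

/-- TGM condition (i): for every zero `x₀` of `f` (in `[0,2π)`), for each `k = 1,…,g−1`,
`lim_{x→x₀} p(x + 2πk/g)² / f(x)` exists finite. -/
def TGMCondOne (f p : ℝ → ℝ) (g : ℕ) : Prop :=
  ∀ x₀ ∈ Set.Ico (0 : ℝ) (2 * Real.pi), f x₀ = 0 →
    ∀ j : ℕ, 1 ≤ j → j < g →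
      ∃ L : ℝ,
        Filter.Tendsto (fun x : ℝ => (p (x + 2 * Real.pi * (j : ℝ) / (g : ℝ)))^2 / f x)
          (nhdsWithin x₀ {x : ℝ | f x ≠ 0}) (nhds L)

/-- TGM condition (ii): `∑_{y ∈ Ω_g(x)} p(y)² > 0` for all `x ∈ [0,2π)`. -/
def TGMCondTwo (p : ℝ → ℝ) (g : ℕ) : Prop :=
  ∀ x ∈ Set.Ico (0 : ℝ) (2 * Real.pi),
    0 < ∑ j ∈ Finset.range g, (p (x + 2 * Real.pi * (j : ℝ) / (g : ℝ)))^2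

/-- The projected symbol `f̂(x) = (1/g) ∑_{y ∈ Ω_g(x/g)} f(y) |p(y)|²`. -/
def projSymbol (g : ℕ) (f p : ℝ → ℝ) : ℝ → ℝ := fun x =>
  ((g : ℝ))⁻¹ *
    ∑ j ∈ Finset.range g,
      f ((x + 2 * Real.pi * (j : ℝ)) / (g : ℝ)) * (p ((x + 2 * Real.pi * (j : ℝ)) / (g : ℝ)))^2

/-!
For (i), write `2 - 2 cos t = t² sinc(t/2)²`: the shifted projector `p(x + 2πj/g)` contains the
factor `(2 - 2 cos (x - x₀))^⌈β/2⌉ = (x - x₀)^(2⌈β/2⌉) · (continuous)`,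
so `p(x + 2πj/g)² / f x` is a continuous function times `|x - x₀|^(2β) / f x`.
For (ii), `p` vanishes only at the mirror points of `x₀` modulo `2π`. If `x - x₀ ∉ (2π/g)ℤ`, no
corner of `x` is such a point; otherwise one corner of `x` is congruent to `x₀` itself.
-/

lemma two_sub_two_cos_eq_sq_mul_sinc_sq (t : ℝ) :
    2 - 2 * Real.cos t = t ^ 2 * Real.sinc (t / 2) ^ 2 := by
  rcases eq_or_ne t 0 with rfl | ht
  · simp
  · have h := Real.sin_sq_eq_half_sub (t / 2)
    rw [mul_div_cancel₀ t two_ne_zero] at h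
    rw [Real.sinc_of_ne_zero (div_ne_zero ht two_ne_zero), div_pow, h]
    field_simp

lemma two_sub_two_cos_eq_zero_iff {θ : ℝ} :
    2 - 2 * Real.cos θ = 0 ↔ ∃ n : ℤ, (n : ℝ) * (2 * Real.pi) = θ := by
  rw [← Real.cos_eq_one_iff]
  constructor <;> intro h <;> linarith

lemma tendsto_sq_div_of_eq_pow_mul {f p h : ℝ → ℝ} {x₀ L : ℝ} {β n : ℕ} {l : Filter ℝ}
    (hl : l ≤ 𝓝 x₀) (hβ : Tendsto (fun x => |x - x₀| ^ (2 * β) / f x) l (𝓝 L)) (hn : β ≤ n)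
    (hp : ∀ x, p x = (x - x₀) ^ n * h x) (hh : ContinuousAt h x₀) :
    Tendsto (fun x => p x ^ 2 / f x) l (𝓝 (0 ^ (2 * (n - β)) * h x₀ ^ 2 * L)) := by
  have hcont : ContinuousAt (fun x => (x - x₀) ^ (2 * (n - β)) * h x ^ 2) x₀ := by fun_prop
  have hlim := hcont.tendsto.mono_left hl
  simp only [sub_self] at hlim
  refine (hlim.mul hβ).congr fun x => ?_
  have hpow : (x - x₀) ^ (2 * (n - β)) * (x - x₀) ^ (2 * β) = ((x - x₀) ^ n) ^ 2 := by
    rw [← pow_add, ← pow_mul]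
    congr 1
    omega
  rw [hp, (even_two_mul β).pow_abs, mul_pow, ← hpow]
  ring

lemma prod_two_sub_two_cos_pow_eq {ι : Type*} [DecidableEq ι] {s : Finset ι} {j : ι}
    (hj : j ∈ s) (c : ι → ℝ) (m : ℕ) (x x₀ : ℝ) :
    ∏ i ∈ s, (2 - 2 * Real.cos (x + c j - (x₀ + c i))) ^ m =
      (x - x₀) ^ (2 * m) * (Real.sinc ((x - x₀) / 2) ^ (2 * m) *
        ∏ i ∈ s.erase j, (2 - 2 * Real.cos (x + c j - (x₀ + c i))) ^ m) := by
  rw [← Finset.mul_prod_erase s _ hj, show x + c j - (x₀ + c j) = x - x₀ by ring,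
    two_sub_two_cos_eq_sq_mul_sinc_sq, mul_pow, ← pow_mul, ← pow_mul, mul_assoc]

lemma exists_shift_forall_ne_int_mul {g : ℕ} (hg : 0 < g) {T : ℝ} (hT : T ≠ 0) (x x₀ : ℝ) :
    ∃ j < g, ∀ i ∈ Finset.Ico 1 g, ∀ n : ℤ, (n : ℝ) * T ≠ x + T * j / g - (x₀ + T * i / g) := by
  have hgR : (g : ℝ) ≠ 0 := by positivity
  by_cases h : ∃ s : ℤ, x - x₀ = T * s / g
  · obtain ⟨s, hs⟩ := h
    have hmod : 0 ≤ (-s) % (g : ℤ) := Int.emod_nonneg _ (by omega)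
    have hlt : (-s) % (g : ℤ) < g := Int.emod_lt_of_pos _ (by omega)
    obtain ⟨j, hj⟩ : ∃ j : ℕ, (j : ℤ) = (-s) % g := ⟨_, Int.toNat_of_nonneg hmod⟩
    refine ⟨j, by omega, fun i hi n hn => ?_⟩
    have hdvd : (g : ℤ) ∣ s + j := by
      rw [hj, Int.dvd_iff_emod_eq_zero, Int.add_emod_emod]
      simp
    have hreal : (n : ℝ) * g = s + j - i := by
      field_simp at hn hs
      apply mul_left_cancel₀ hT
      linear_combination hn + hs
    have hi_dvd : (g : ℤ) ∣ i := by
      have hint : (n : ℤ) * g = s + j - i := by exact_mod_cast hreal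
      rw [show (i : ℤ) = s + j - n * g by linear_combination hint]
      exact dvd_sub hdvd (dvd_mul_left _ _)
    obtain ⟨hi1, hig⟩ := Finset.mem_Ico.1 hi
    exact absurd (Nat.le_of_dvd hi1 (Int.natCast_dvd_natCast.1 hi_dvd)) (by omega)
  · push Not at h
    refine ⟨0, hg, fun i hi n hn => h (i + g * n) ?_⟩
    simp only [Nat.cast_zero, mul_zero, zero_div, add_zero] at hn
    field_simp at hn ⊢
    push_cast
    linear_combination -hn

theorem canonical_projector_satisfies_TGM_general (g : ℕ) (hg : 2 ≤ g)
    (f : ℝ → ℝ)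
    (x₀ : ℝ)
    (huniq : ∀ x ∈ Set.Ico (0 : ℝ) (2 * Real.pi), f x = 0 → x = x₀)
    (β : ℕ)
    (hβ : ∃ L : ℝ,
      Filter.Tendsto (fun x : ℝ => |x - x₀| ^ (2 * β) / f x)
        (nhdsWithin x₀ {x : ℝ | f x ≠ 0}) (nhds L)) :
    TGMCondOne f
        (fun x : ℝ => ∏ j ∈ Finset.Ico 1 g,
          (2 - 2 * Real.cos (x - (x₀ + 2 * Real.pi * (j : ℝ) / (g : ℝ)))) ^ ((β + 1) / 2))
        g
      ∧ TGMCondTwo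
        (fun x : ℝ => ∏ j ∈ Finset.Ico 1 g,
          (2 - 2 * Real.cos (x - (x₀ + 2 * Real.pi * (j : ℝ) / (g : ℝ)))) ^ ((β + 1) / 2))
        g := by
  refine ⟨fun x₁ hx₁ hfx₁ j hj hjg => ?_, fun x _ => ?_⟩
  · obtain rfl := huniq x₁ hx₁ hfx₁
    obtain ⟨L, hL⟩ := hβ
    exact ⟨_, tendsto_sq_div_of_eq_pow_mul nhdsWithin_le_nhds hL (by omega)
      (fun x => prod_two_sub_two_cos_pow_eq (Finset.mem_Ico.2 ⟨hj, hjg⟩)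
        (fun i : ℕ => 2 * Real.pi * i / g) _ x x₁) (by fun_prop)⟩
  · obtain ⟨j, hjg, hj⟩ :=
      exists_shift_forall_ne_int_mul (by omega : 0 < g) Real.two_pi_pos.ne' x x₀
    refine Finset.sum_pos' (fun _ _ => sq_nonneg _)
      ⟨j, Finset.mem_range.2 hjg, sq_pos_of_ne_zero ?_⟩
    refine Finset.prod_ne_zero_iff.2 fun i hi => pow_ne_zero _ fun h0 => ?_
    obtain ⟨n, hn⟩ := two_sub_two_cos_eq_zero_iff.1 h0
    exact hj i hi n hn

theorem canonical_projector_satisfies_TGM (g : ℕ) (hg : 2 ≤ g)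
    (f : ℝ → ℝ) (hf : IsTrigPolyR f) (hf0 : ∀ x, 0 ≤ f x)
    (x₀ : ℝ) (hx₀ : x₀ ∈ Set.Ico (0 : ℝ) (2 * Real.pi)) (hzero : f x₀ = 0)
    (huniq : ∀ x ∈ Set.Ico (0 : ℝ) (2 * Real.pi), f x = 0 → x = x₀)
    (β : ℕ)
    (hβ : ∃ L : ℝ,
      Filter.Tendsto (fun x : ℝ => |x - x₀| ^ (2 * β) / f x)
        (nhdsWithin x₀ {x : ℝ | f x ≠ 0}) (nhds L)) :
    TGMCondOne f
        (fun x : ℝ => ∏ j ∈ Finset.Ico 1 g,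
          (2 - 2 * Real.cos (x - (x₀ + 2 * Real.pi * (j : ℝ) / (g : ℝ)))) ^ ((β + 1) / 2))
        g
      ∧ TGMCondTwo
        (fun x : ℝ => ∏ j ∈ Finset.Ico 1 g,
          (2 - 2 * Real.cos (x - (x₀ + 2 * Real.pi * (j : ℝ) / (g : ℝ)))) ^ ((β + 1) / 2))
        g :=
  canonical_projector_satisfies_TGM_general g hg f x₀ huniq β hβ
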